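/- arXiv:1803.06677 — 4 statements merged into one kernel-verified Lean document; each statement's English description precedes it below -/
import Mathlib

section
/- Let f : ℝ → ℂ be infinitely differentiable, let N be a positive integer, b_0, b_1, …, b_N real numbers, q a complex number and n, r natural numbers. Define B^{(f)}_m(x) = (d^m/dt^m)|_{t=0}[ f(t) e^{−xt} ] for m ∈ ℕ and x ∈ ℂ, and define g(t) = f(t) e^{−qt} · (d^r/dt^r)[ e^{−b_0 t} ∏_{j=1}^N (1 − e^{−b_j t}) ]. Then the n-th derivative of g at 0 equals (−1)^r ∑_{T ⊆ {1,…,N}} (−1)^{|T|} (b_0 + ∑_{j∈T} b_j)^r · B^{(f)}_n(q + b_0 + ∑_{j∈T} b_j). Moreover g^{(n)}(0) = 0 whenever r + n < N, and g^{(n)}(0) = f(0) · N! · ∏_{j=1}^N b_j whenever r + n = N. -/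
open Finset


lemma expR_hasDerivAt (c : ℂ) (t : ℝ) :
    HasDerivAt (fun s : ℝ => Complex.exp (c * s)) (c * Complex.exp (c * t)) t := by
  have := (((hasDerivAt_id (t : ℂ)).const_mul c).cexp).comp_ofReal
  simpa [mul_comm] using this

lemma expR_contDiff (c : ℂ) : ContDiff ℝ (⊤ : ℕ∞) (fun s : ℝ => Complex.exp (c * s)) :=
  Complex.contDiff_exp.comp (contDiff_const.mul Complex.ofRealCLM.contDiff)

lemma iteratedDeriv_expR (c : ℂ) (r : ℕ) :
    iteratedDeriv r (fun s : ℝ => Complex.exp (c * s)) = fun t : ℝ => c ^ r * Complex.exp (c * t) := by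
  induction r with
  | zero => simp
  | succ r ih =>
    funext t
    rw [iteratedDeriv_succ, ih]
    rw [deriv_const_mul _ (expR_hasDerivAt c t).differentiableAt, (expR_hasDerivAt c t).deriv]
    ring

lemma iteratedDeriv_fun_sum' {ι : Type*} (u : Finset ι) (F : ι → ℝ → ℂ)
    (h : ∀ i ∈ u, ContDiff ℝ (⊤ : ℕ∞) (F i)) (n : ℕ) :
    iteratedDeriv n (fun t => ∑ i ∈ u, F i t) = fun x => ∑ i ∈ u, iteratedDeriv n (F i) x := by
  induction n with
  | zero => simp [iteratedDeriv_zero]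
  | succ n ih =>
    funext x
    rw [iteratedDeriv_succ, ih]
    rw [deriv_fun_sum (fun i hi => ((h i hi).differentiable_iteratedDeriv n
      (by exact_mod_cast lt_top_iff_ne_top.2 (by simp))).differentiableAt)]
    simp [iteratedDeriv_succ]

lemma iteratedDeriv_cmul (c : ℂ) (F : ℝ → ℂ) (h : ContDiff ℝ (⊤ : ℕ∞) F) (n : ℕ) (x : ℝ) :
    iteratedDeriv n (fun t => c * F t) x = c * iteratedDeriv n F x := by
  have hu : UniqueDiffOn ℝ (Set.univ : Set ℝ) := uniqueDiffOn_univ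
  simp_rw [← iteratedDerivWithin_univ]
  exact iteratedDerivWithin_const_smul (Set.mem_univ x) hu c
    (h.of_le (by exact_mod_cast le_top)).contDiffWithinAt


lemma pascal_sum (n : ℕ) (t : ℕ → ℂ) :
    ∑ k ∈ range (n + 1), (n.choose k : ℂ) * (t (k + 1) + t k)
      = ∑ k ∈ range (n + 2), ((n + 1).choose k : ℂ) * t k := by
  have h2 := Finset.sum_range_succ' (fun k => (n.choose k : ℂ) * t k) (n + 1)
  have h3 := Finset.sum_range_succ (fun k => (n.choose k : ℂ) * t k) (n + 1)
  rw [Finset.sum_range_succ' (fun k => ((n + 1).choose k : ℂ) * t k) (n + 1)]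
  simp only [Nat.choose_succ_succ, Nat.cast_add, add_mul, Nat.choose_zero_right, Nat.cast_one,
    one_mul, Nat.choose_succ_self, Nat.cast_zero, zero_mul, add_zero, mul_add, Nat.succ_eq_add_one,
    Finset.sum_add_distrib] at *
  linear_combination h2 - h3

lemma expR_hasDerivAt' (c : ℂ) (t : ℝ) :
    HasDerivAt (fun s : ℝ => Complex.exp (c * s)) (c * Complex.exp (c * t)) t := by
  have := (((hasDerivAt_id (t : ℂ)).const_mul c).cexp).comp_ofReal
  simpa [mul_comm] using this

private lemma diffAt (f : ℝ → ℂ) (hf : ContDiff ℝ (⊤ : ℕ∞) f) (m : ℕ) (y : ℝ) :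
    DifferentiableAt ℝ (iteratedDeriv m f) y :=
  (hf.differentiable_iteratedDeriv m
    (by exact_mod_cast lt_top_iff_ne_top.2 (by simp))).differentiableAt

lemma leibniz_mul (f g : ℝ → ℂ) (hf : ContDiff ℝ (⊤ : ℕ∞) f) (hg : ContDiff ℝ (⊤ : ℕ∞) g) (n : ℕ) :
    iteratedDeriv n (fun t => f t * g t) = fun x =>
      ∑ k ∈ Finset.range (n + 1),
        (n.choose k : ℂ) * (iteratedDeriv k f x * iteratedDeriv (n - k) g x) := by
  induction n with
  | zero => simp
  | succ n ih =>
    funext x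
    rw [iteratedDeriv_succ, ih,
      deriv_fun_sum (A := fun k y => (n.choose k : ℂ) * (iteratedDeriv k f y * iteratedDeriv (n - k) g y))
        (fun k _ => (((diffAt f hf k x).mul (diffAt g hg (n - k) x)).const_mul _))]
    have hterm : ∀ k ∈ range (n + 1),
        deriv (fun y => (n.choose k : ℂ) * (iteratedDeriv k f y * iteratedDeriv (n - k) g y)) x
          = (n.choose k : ℂ) * ((iteratedDeriv (k + 1) f x * iteratedDeriv (n + 1 - (k + 1)) g x)
            + iteratedDeriv k f x * iteratedDeriv (n + 1 - k) g x) := by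
      intro k hk
      rw [deriv_const_mul _ (d := fun y => iteratedDeriv k f y * iteratedDeriv (n - k) g y) ((diffAt f hf k x).mul (diffAt g hg (n - k) x)),
        deriv_fun_mul (diffAt f hf k x) (diffAt g hg (n - k) x), ← iteratedDeriv_succ,
        ← iteratedDeriv_succ]
      have hk' : k ≤ n := Nat.lt_succ_iff.mp (mem_range.mp hk)
      have e1 : n + 1 - (k + 1) = n - k := by omega
      have e2 : n - k + 1 = n + 1 - k := by omega
      rw [e1, e2]
    rw [Finset.sum_congr rfl hterm]
    exact pascal_sum n (fun k => iteratedDeriv k f x * iteratedDeriv (n + 1 - k) g x)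


lemma diff_pair (b : ℕ → ℂ) (s : Finset ℕ) :
    (∀ m < s.card, ∀ a : ℂ,
        ∑ T ∈ s.powerset, (-1 : ℂ) ^ T.card * (a + ∑ j ∈ T, b j) ^ m = 0) ∧
    (∀ a : ℂ, ∑ T ∈ s.powerset, (-1 : ℂ) ^ T.card * (a + ∑ j ∈ T, b j) ^ s.card
        = (-1 : ℂ) ^ s.card * (s.card.factorial : ℂ) * ∏ j ∈ s, b j) := by
  classical
  induction s using Finset.induction_on with
  | empty =>
    constructor
    · intro m hm; simp at hm
    · intro a; simp
  | @insert i s hi ih =>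
    have key : ∀ (m : ℕ) (a : ℂ),
        ∑ T ∈ (insert i s).powerset, (-1 : ℂ) ^ T.card * (a + ∑ j ∈ T, b j) ^ m
          = -∑ k ∈ range m, (m.choose k : ℂ) * b i ^ (m - k) *
              ∑ T ∈ s.powerset, (-1 : ℂ) ^ T.card * (a + ∑ j ∈ T, b j) ^ k := by
      intro m a
      have hstep : ∀ T ∈ s.powerset,
          (-1 : ℂ) ^ T.card * (a + ∑ j ∈ T, b j) ^ m
            + (-1 : ℂ) ^ (insert i T).card * (a + ∑ j ∈ insert i T, b j) ^ m
          = ∑ k ∈ range m, -((m.choose k : ℂ) * b i ^ (m - k)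
              * ((-1 : ℂ) ^ T.card * (a + ∑ j ∈ T, b j) ^ k)) := by
        intro T hT
        have hiT : i ∉ T := fun h => hi (Finset.mem_powerset.mp hT h)
        rw [Finset.card_insert_of_notMem hiT, Finset.sum_insert hiT]
        have hexp : (a + (b i + ∑ j ∈ T, b j)) ^ m
            = ∑ k ∈ range (m + 1),
                (a + ∑ j ∈ T, b j) ^ k * b i ^ (m - k) * (m.choose k : ℂ) := by
          rw [show a + (b i + ∑ j ∈ T, b j) = (a + ∑ j ∈ T, b j) + b i by ring, add_pow]
        rw [hexp, Finset.sum_range_succ, Nat.choose_self, Nat.sub_self, pow_zero, Nat.cast_one,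
          mul_one, mul_one, pow_succ]
        have hsum : (-1 : ℂ) ^ T.card *
              ∑ k ∈ range m, (a + ∑ j ∈ T, b j) ^ k * b i ^ (m - k) * (m.choose k : ℂ)
            = ∑ k ∈ range m, (m.choose k : ℂ) * b i ^ (m - k)
                * ((-1 : ℂ) ^ T.card * (a + ∑ j ∈ T, b j) ^ k) := by
          rw [Finset.mul_sum]; exact Finset.sum_congr rfl fun k _ => by ring
        rw [Finset.sum_neg_distrib]
        linear_combination -hsum
      calc ∑ T ∈ (insert i s).powerset, (-1 : ℂ) ^ T.card * (a + ∑ j ∈ T, b j) ^ m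
          = ∑ T ∈ s.powerset, ((-1 : ℂ) ^ T.card * (a + ∑ j ∈ T, b j) ^ m
              + (-1 : ℂ) ^ (insert i T).card * (a + ∑ j ∈ insert i T, b j) ^ m) := by
            rw [Finset.sum_powerset_insert hi, ← Finset.sum_add_distrib]
        _ = ∑ T ∈ s.powerset, ∑ k ∈ range m, -((m.choose k : ℂ) * b i ^ (m - k)
              * ((-1 : ℂ) ^ T.card * (a + ∑ j ∈ T, b j) ^ k)) := Finset.sum_congr rfl hstep
        _ = -∑ k ∈ range m, (m.choose k : ℂ) * b i ^ (m - k) *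
              ∑ T ∈ s.powerset, (-1 : ℂ) ^ T.card * (a + ∑ j ∈ T, b j) ^ k := by
            rw [Finset.sum_comm, ← Finset.sum_neg_distrib]
            exact Finset.sum_congr rfl fun k _ => by
              rw [Finset.sum_neg_distrib, Finset.mul_sum]
    constructor
    · intro m hm a
      rw [key]
      rw [Finset.card_insert_of_notMem hi] at hm
      rw [Finset.sum_eq_zero, neg_zero]
      intro k hk
      rw [ih.1 k (by have := Finset.mem_range.mp hk; omega) a, mul_zero]
    · intro a
      rw [Finset.card_insert_of_notMem hi, key]
      rw [Finset.sum_eq_single_of_mem s.card (Finset.self_mem_range_succ s.card)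
        (fun k hk hne => by
          rw [ih.1 k (by have := Finset.mem_range.mp hk; omega) a, mul_zero])]
      rw [ih.2 a, Nat.choose_succ_self_right, Finset.prod_insert hi, Nat.factorial_succ,
        show s.card + 1 - s.card = 1 by omega, pow_one]
      push_cast
      ring
section Main

open Finset

/-- derivatives at 0 of `g(t) = f(t) e^{−qt} (d^r/dt^r)[e^{−b_0 t}∏_{j=1}^N(1−e^{−b_j t})]`,
expressed via the generalized Bernoulli polynomials `B^{(f)}_m(x) = (d^m/dt^m)|₀ [f(t)e^{−xt}]`. -/
theorem stmt1 (f : ℝ → ℂ) (hf : ContDiff ℝ (⊤ : ℕ∞) f) (N : ℕ) (hN : 0 < N)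
    (b : ℕ → ℝ) (q : ℂ) (n r : ℕ)
    (B : ℕ → ℂ → ℂ)
    (hB : ∀ (m : ℕ) (x : ℂ),
      B m x = iteratedDeriv m (fun t : ℝ => f t * Complex.exp (-x * (t : ℂ))) 0)
    (g : ℝ → ℂ)
    (hg : ∀ t : ℝ, g t = f t * Complex.exp (-q * (t : ℂ)) *
      iteratedDeriv r (fun s : ℝ => Complex.exp (-(b 0 : ℂ) * (s : ℂ)) *
        ∏ j ∈ Finset.Icc 1 N, (1 - Complex.exp (-(b j : ℂ) * (s : ℂ)))) t) :
    iteratedDeriv n g 0 =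
      (-1 : ℂ) ^ r * ∑ T ∈ (Finset.Icc 1 N).powerset,
        (-1 : ℂ) ^ T.card * ((b 0 : ℂ) + ∑ j ∈ T, (b j : ℂ)) ^ r *
          B n (q + (b 0 : ℂ) + ∑ j ∈ T, (b j : ℂ)) ∧
    (r + n < N → iteratedDeriv n g 0 = 0) ∧
    (r + n = N → iteratedDeriv n g 0 =
      f 0 * (Nat.factorial N : ℂ) * ∏ j ∈ Finset.Icc 1 N, (b j : ℂ)) := by
  classical
  set P := (Finset.Icc 1 N).powerset with hP
  set c : Finset ℕ → ℂ := fun T => (b 0 : ℂ) + ∑ j ∈ T, (b j : ℂ) with hc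
  -- Step A: expand the product into a sum of exponentials
  have stepA : ∀ s : ℝ,
      Complex.exp (-(b 0 : ℂ) * (s : ℂ)) *
        ∏ j ∈ Finset.Icc 1 N, (1 - Complex.exp (-(b j : ℂ) * (s : ℂ)))
      = ∑ T ∈ P, (-1 : ℂ) ^ T.card * Complex.exp (-(c T) * (s : ℂ)) := by
    intro s
    have hprod : ∏ j ∈ Finset.Icc 1 N, ((1 : ℂ) - Complex.exp (-(b j : ℂ) * (s : ℂ)))
        = ∑ T ∈ P, (-1 : ℂ) ^ T.card * ∏ j ∈ T, Complex.exp (-(b j : ℂ) * (s : ℂ)) := by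
      rw [Finset.prod_sub (fun _ => (1 : ℂ)) (fun j => Complex.exp (-(b j : ℂ) * (s : ℂ)))]
      exact Finset.sum_congr rfl fun T _ => by rw [Finset.prod_const_one, mul_one]
    rw [hprod, Finset.mul_sum]
    refine Finset.sum_congr rfl fun T _ => ?_
    have hexps : ∏ j ∈ T, Complex.exp (-(b j : ℂ) * (s : ℂ))
        = Complex.exp (∑ j ∈ T, -(b j : ℂ) * (s : ℂ)) := (Complex.exp_sum T _).symm
    rw [hexps, ← mul_assoc, mul_comm (Complex.exp _) ((-1 : ℂ) ^ T.card), mul_assoc,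
      ← Complex.exp_add]
    congr 1
    have hs : (∑ j ∈ T, -(b j : ℂ) * (s : ℂ)) = -((∑ j ∈ T, (b j : ℂ)) * (s : ℂ)) := by
      rw [Finset.sum_mul, ← Finset.sum_neg_distrib]
      exact Finset.sum_congr rfl fun j _ => by ring
    rw [hs, hc]
    ring
  -- Step B: the r-th derivative of that sum
  have hsmB : ∀ T ∈ P, ContDiff ℝ (⊤ : ℕ∞) (fun s : ℝ => (-1 : ℂ) ^ T.card *
      Complex.exp (-(c T) * (s : ℂ))) :=
    fun T _ => contDiff_const.mul (expR_contDiff (-(c T)))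
  have stepB : ∀ t : ℝ,
      iteratedDeriv r (fun s : ℝ => Complex.exp (-(b 0 : ℂ) * (s : ℂ)) *
        ∏ j ∈ Finset.Icc 1 N, (1 - Complex.exp (-(b j : ℂ) * (s : ℂ)))) t
      = ∑ T ∈ P, (-1 : ℂ) ^ T.card * ((-(c T)) ^ r * Complex.exp (-(c T) * (t : ℂ))) := by
    intro t
    have e1 : (fun s : ℝ => Complex.exp (-(b 0 : ℂ) * (s : ℂ)) *
        ∏ j ∈ Finset.Icc 1 N, (1 - Complex.exp (-(b j : ℂ) * (s : ℂ))))
        = fun s : ℝ => ∑ T ∈ P, (-1 : ℂ) ^ T.card * Complex.exp (-(c T) * (s : ℂ)) :=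
      funext stepA
    rw [e1]
    have e2 : iteratedDeriv r
        (fun s : ℝ => ∑ T ∈ P, (-1 : ℂ) ^ T.card * Complex.exp (-(c T) * (s : ℂ)))
        = fun t : ℝ => ∑ T ∈ P, iteratedDeriv r
            (fun s : ℝ => (-1 : ℂ) ^ T.card * Complex.exp (-(c T) * (s : ℂ))) t :=
      iteratedDeriv_fun_sum' P _ hsmB r
    rw [e2]
    refine Finset.sum_congr rfl fun T _ => ?_
    rw [iteratedDeriv_cmul _ _ (expR_contDiff (-(c T))) r t]
    congr 1
    exact congrFun (iteratedDeriv_expR (-(c T)) r) t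
  -- Step C/D: g as a sum, and its n-th derivative at 0
  have hgfun : g = fun t : ℝ => ∑ T ∈ P,
      (-1 : ℂ) ^ T.card * (-(c T)) ^ r *
        (f t * Complex.exp (-(q + c T) * (t : ℂ))) := by
    funext t
    rw [hg t, stepB t, Finset.mul_sum]
    refine Finset.sum_congr rfl fun T _ => ?_
    rw [show -(q + c T) * (t : ℂ) = -q * (t : ℂ) + -(c T) * (t : ℂ) by ring, Complex.exp_add]
    ring
  have hsmD : ∀ T ∈ P, ContDiff ℝ (⊤ : ℕ∞) (fun t : ℝ =>
      (-1 : ℂ) ^ T.card * (-(c T)) ^ r * (f t * Complex.exp (-(q + c T) * (t : ℂ)))) :=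
    fun T _ => contDiff_const.mul (hf.mul (expR_contDiff (-(q + c T))))
  have hD : iteratedDeriv n g 0 = ∑ T ∈ P,
      (-1 : ℂ) ^ T.card * (-(c T)) ^ r * B n (q + c T) := by
    rw [hgfun]
    have e3 : iteratedDeriv n (fun t : ℝ => ∑ T ∈ P,
        (-1 : ℂ) ^ T.card * (-(c T)) ^ r * (f t * Complex.exp (-(q + c T) * (t : ℂ))))
        = fun x : ℝ => ∑ T ∈ P, iteratedDeriv n (fun t : ℝ =>
            (-1 : ℂ) ^ T.card * (-(c T)) ^ r *
              (f t * Complex.exp (-(q + c T) * (t : ℂ)))) x :=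
      iteratedDeriv_fun_sum' P _ hsmD n
    rw [e3]
    refine Finset.sum_congr rfl fun T _ => ?_
    rw [iteratedDeriv_cmul _ _ (hf.mul (expR_contDiff (-(q + c T)))) n 0, hB n (q + c T)]
  -- Part 1
  have part1 : iteratedDeriv n g 0 =
      (-1 : ℂ) ^ r * ∑ T ∈ P,
        (-1 : ℂ) ^ T.card * (c T) ^ r * B n (q + (b 0 : ℂ) + ∑ j ∈ T, (b j : ℂ)) := by
    rw [hD, Finset.mul_sum]
    refine Finset.sum_congr rfl fun T _ => ?_
    rw [show q + (b 0 : ℂ) + ∑ j ∈ T, (b j : ℂ) = q + c T by rw [hc]; ring,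
      show ((-(c T)) ^ r : ℂ) = (-1 : ℂ) ^ r * (c T) ^ r by rw [neg_pow]]
    ring
  -- combinatorial inputs
  have hcard : (Finset.Icc 1 N).card = N := by rw [Nat.card_Icc]; omega
  have hS0 : ∀ m < N, (∑ T ∈ P, (-1 : ℂ) ^ T.card * (c T) ^ m) = 0 := by
    intro m hm
    have := (diff_pair (fun j => (b j : ℂ)) (Finset.Icc 1 N)).1 m (by rw [hcard]; exact hm)
      (b 0 : ℂ)
    exact this
  have hSN : (∑ T ∈ P, (-1 : ℂ) ^ T.card * (c T) ^ N)
      = (-1 : ℂ) ^ N * (N.factorial : ℂ) * ∏ j ∈ Finset.Icc 1 N, (b j : ℂ) := by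
    have := (diff_pair (fun j => (b j : ℂ)) (Finset.Icc 1 N)).2 (b 0 : ℂ)
    rw [hcard] at this
    exact this
  -- Leibniz expansion of each B-value
  have hBT : ∀ T ∈ P, (-1 : ℂ) ^ T.card * (-(c T)) ^ r * B n (q + c T)
      = ∑ k ∈ range (n + 1), (n.choose k : ℂ) * iteratedDeriv k f 0 * (-1 : ℂ) ^ (r + (n - k)) *
          ∑ i ∈ range (n - k + 1), ((n - k).choose i : ℂ) * q ^ (n - k - i) *
            ((-1 : ℂ) ^ T.card * (c T) ^ (r + i)) := by
    intro T _
    rw [hB n (q + c T)]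
    have hL' : iteratedDeriv n (fun t : ℝ => f t * Complex.exp (-(q + c T) * (t : ℂ))) 0
        = ∑ k ∈ range (n + 1), (n.choose k : ℂ) * (iteratedDeriv k f 0 *
            iteratedDeriv (n - k) (fun t : ℝ => Complex.exp (-(q + c T) * (t : ℂ))) 0) :=
      congrFun (leibniz_mul f _ hf (expR_contDiff _) n) 0
    rw [hL', Finset.mul_sum]
    refine Finset.sum_congr rfl fun k hk => ?_
    have hE : iteratedDeriv (n - k) (fun t : ℝ => Complex.exp (-(q + c T) * (t : ℂ))) 0
        = (-(q + c T)) ^ (n - k) := by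
      have := congrFun (iteratedDeriv_expR (-(q + c T)) (n - k)) 0
      rw [this]
      simp
    rw [hE]
    have hinner : ∑ i ∈ range (n - k + 1), ((n - k).choose i : ℂ) * q ^ (n - k - i) *
          ((-1 : ℂ) ^ T.card * (c T) ^ (r + i))
        = (-1 : ℂ) ^ T.card * (c T) ^ r *
            ∑ i ∈ range (n - k + 1), (c T) ^ i * q ^ (n - k - i) * ((n - k).choose i : ℂ) := by
      rw [Finset.mul_sum]
      exact Finset.sum_congr rfl fun i _ => by rw [pow_add]; ring
    rw [hinner]
    have hq : (-(q + c T)) ^ (n - k) = (-1 : ℂ) ^ (n - k) *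
        ∑ i ∈ range (n - k + 1), (c T) ^ i * q ^ (n - k - i) * ((n - k).choose i : ℂ) := by
      rw [neg_pow]
      congr 1
      rw [show q + c T = c T + q by ring, add_pow]
    rw [hq, show ((-(c T)) ^ r : ℂ) = (-1 : ℂ) ^ r * (c T) ^ r by rw [neg_pow],
      pow_add (-1 : ℂ) r (n - k)]
    ring
  have hform : iteratedDeriv n g 0
      = ∑ k ∈ range (n + 1), (n.choose k : ℂ) * iteratedDeriv k f 0 * (-1 : ℂ) ^ (r + (n - k)) *
          ∑ i ∈ range (n - k + 1), ((n - k).choose i : ℂ) * q ^ (n - k - i) *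
            (∑ T ∈ P, (-1 : ℂ) ^ T.card * (c T) ^ (r + i)) := by
    rw [hD, Finset.sum_congr rfl hBT, Finset.sum_comm]
    refine Finset.sum_congr rfl fun k _ => ?_
    rw [← Finset.mul_sum]
    congr 1
    rw [Finset.sum_comm]
    exact Finset.sum_congr rfl fun i _ => by rw [← Finset.mul_sum]
  refine ⟨part1, ?_, ?_⟩
  · intro h2
    rw [hform]
    refine Finset.sum_eq_zero fun k hk => ?_
    have hz : ∑ i ∈ range (n - k + 1), ((n - k).choose i : ℂ) * q ^ (n - k - i) *
        (∑ T ∈ P, (-1 : ℂ) ^ T.card * (c T) ^ (r + i)) = 0 :=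
      Finset.sum_eq_zero fun i hi => by
        rw [hS0 (r + i) (by have h1 := Finset.mem_range.mp hi; omega), mul_zero]
    rw [hz, mul_zero]
  · intro h3
    rw [hform]
    rw [Finset.sum_eq_single_of_mem 0 (Finset.mem_range.mpr (by omega))
      (fun k hk hkne => by
        have hz : ∑ i ∈ range (n - k + 1), ((n - k).choose i : ℂ) * q ^ (n - k - i) *
            (∑ T ∈ P, (-1 : ℂ) ^ T.card * (c T) ^ (r + i)) = 0 :=
          Finset.sum_eq_zero fun i hi => by
            rw [hS0 (r + i) (by
              have h1 := Finset.mem_range.mp hi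
              have h2 := Finset.mem_range.mp hk
              omega), mul_zero]
        rw [hz, mul_zero])]
    simp only [Nat.sub_zero, Nat.choose_zero_right, Nat.cast_one, one_mul, iteratedDeriv_zero]
    rw [Finset.sum_eq_single_of_mem n (Finset.mem_range.mpr n.lt_succ_self)
      (fun i hi hine => by
        rw [hS0 (r + i) (by
          have h1 := Finset.mem_range.mp hi
          omega), mul_zero])]
    rw [h3, Nat.choose_self, Nat.sub_self, pow_zero, Nat.cast_one, one_mul, one_mul, hSN]
    have hsq : (-1 : ℂ) ^ N * (-1 : ℂ) ^ N = 1 := by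
      rw [← pow_add]
      exact Even.neg_one_pow ⟨N, rfl⟩
    linear_combination f 0 * (N.factorial : ℂ) * (∏ j ∈ Finset.Icc 1 N, (b j : ℂ)) * hsq

end Main
end

section
/- Let M, N be natural numbers with M ≤ N, let a_1,…,a_M > 0 and b_0, b_1,…,b_N > 0 be real numbers, set K(t) = e^{−b_0 t} ∏_{j=1}^N (1 − e^{−b_j t}) / ∏_{i=1}^M (1 − e^{−a_i t}) for t > 0, and define η(q) = exp( ∫_0^∞ (e^{−tq} − 1) K(t) dt/t ) for real q > −b_0. Then: (i) if M < N, then η(q) tends to exp( − ∫_0^∞ K(t) dt/t ) as q → +∞ along the reals; (ii) if M = N, then there is a constant C > 0 such that | log η(q) + (b_1 ⋯ b_N)/(a_1 ⋯ a_N) · log q | ≤ C for all real q ≥ 1. -/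
/-!
Write `ρ = (b₁⋯b_N)/(a₁⋯a_M)`. The elementary bounds `c t e^{-ct} ≤ 1 - e^{-ct} ≤ c t` give
`ρ t^{N-M} e^{-S t} ≤ K(t) ≤ ρ t^{N-M} e^{A t}` for suitable `A, S ≥ 0`, and `K(t) = O(e^{-b₀ t})`
at infinity. If `M < N`, then `K(t)/t` is integrable on `(0, ∞)` and (i) follows by dominated
convergence, since `e^{-tq} - 1 → -1`. If `M = N`, then `(K(t) - ρ e^{-t})/t` is integrable, so
its integral against `e^{-tq} - 1` is bounded uniformly in `q ≥ 0`, while Frullani's integral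
gives `∫₀^∞ (e^{-tq} - 1) e^{-t} dt/t = -log (1 + q)`, which is `-log q + O(1)` for `q ≥ 1`.
-/

open MeasureTheory Real Set Filter Topology

lemma one_sub_exp_neg_le_self (x : ℝ) : 1 - exp (-x) ≤ x := by
  linarith [one_sub_le_exp_neg x]

lemma mul_exp_neg_le_one_sub_exp_neg (x : ℝ) : x * exp (-x) ≤ 1 - exp (-x) := by
  have h := mul_le_mul_of_nonneg_right (add_one_le_exp x) (exp_pos (-x)).le
  rw [← exp_add, add_neg_cancel, exp_zero] at h
  linarith

lemma exp_sub_one_le_mul_exp (x : ℝ) : exp x - 1 ≤ x * exp x := by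
  have h := mul_le_mul_of_nonneg_right (one_sub_exp_neg_le_self x) (exp_pos x).le
  rw [sub_mul, ← exp_add, neg_add_cancel, exp_zero, one_mul] at h
  linarith

lemma abs_exp_neg_sub_one_le_one {x : ℝ} (hx : 0 ≤ x) : |exp (-x) - 1| ≤ 1 := by
  rw [abs_sub_comm, abs_of_nonneg (sub_nonneg.2 (exp_le_one_iff.2 (neg_nonpos.2 hx)))]
  linarith [exp_pos (-x)]

lemma abs_exp_neg_sub_one_le_self {x : ℝ} (hx : 0 ≤ x) : |exp (-x) - 1| ≤ x := by
  rw [abs_sub_comm, abs_of_nonneg (sub_nonneg.2 (exp_le_one_iff.2 (neg_nonpos.2 hx)))]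
  exact one_sub_exp_neg_le_self x

lemma abs_sub_le_of_mul_exp_le_of_le_mul_exp {x ρ A S t : ℝ} (hρ : 0 ≤ ρ) (hA : 0 ≤ A)
    (hS : 0 ≤ S) (ht : 0 ≤ t) (ht₁ : t ≤ 1) (hlo : ρ * exp (-S * t) ≤ x)
    (hhi : x ≤ ρ * exp (A * t)) : |x - ρ| ≤ ρ * (A * exp A + S) * t := by
  have hup : exp (A * t) - 1 ≤ A * t * exp A :=
    (exp_sub_one_le_mul_exp _).trans
      (mul_le_mul_of_nonneg_left (exp_le_exp.2 (by nlinarith)) (by positivity))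
  have hdown : 1 - exp (-S * t) ≤ S * t := by simpa using one_sub_exp_neg_le_self (S * t)
  have hAt : 0 ≤ ρ * (A * t * exp A) := by positivity
  have hSt : 0 ≤ ρ * (S * t) := by positivity
  rw [abs_le]
  constructor <;> linarith [mul_le_mul_of_nonneg_left hup hρ, mul_le_mul_of_nonneg_left hdown hρ]

lemma one_sub_exp_neg_mul_nonneg {c t : ℝ} (hc : 0 ≤ c) (ht : 0 ≤ t) :
    0 ≤ 1 - exp (-c * t) := by
  rw [sub_nonneg, exp_le_one_iff, neg_mul, neg_nonpos]
  positivity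

section ProdOneSubExp

variable {ι : Type*} {s : Finset ι} {c : ι → ℝ} {t : ℝ}

lemma prod_one_sub_exp_neg_pos (hc : ∀ i ∈ s, 0 < c i) (ht : 0 < t) :
    0 < ∏ i ∈ s, (1 - exp (-c i * t)) :=
  Finset.prod_pos fun i hi => by
    rw [sub_pos, exp_lt_one_iff, neg_mul, neg_lt_zero]
    exact mul_pos (hc i hi) ht

lemma prod_one_sub_exp_neg_nonneg (hc : ∀ i ∈ s, 0 ≤ c i) (ht : 0 ≤ t) :
    0 ≤ ∏ i ∈ s, (1 - exp (-c i * t)) :=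
  Finset.prod_nonneg fun i hi => one_sub_exp_neg_mul_nonneg (hc i hi) ht

lemma prod_one_sub_exp_neg_le_one (hc : ∀ i ∈ s, 0 ≤ c i) (ht : 0 ≤ t) :
    ∏ i ∈ s, (1 - exp (-c i * t)) ≤ 1 :=
  Finset.prod_le_one (fun i hi => one_sub_exp_neg_mul_nonneg (hc i hi) ht)
    fun i _ => by linarith [exp_pos (-c i * t)]

lemma prod_one_sub_exp_neg_le_prod_mul_pow (hc : ∀ i ∈ s, 0 ≤ c i) (ht : 0 ≤ t) :
    ∏ i ∈ s, (1 - exp (-c i * t)) ≤ (∏ i ∈ s, c i) * t ^ s.card := by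
  rw [← Finset.prod_const, ← Finset.prod_mul_distrib]
  refine Finset.prod_le_prod (fun i hi => one_sub_exp_neg_mul_nonneg (hc i hi) ht)
    fun i _ => ?_
  simpa [neg_mul] using one_sub_exp_neg_le_self (c i * t)

lemma prod_mul_pow_mul_exp_le_prod_one_sub_exp_neg (hc : ∀ i ∈ s, 0 ≤ c i) (ht : 0 ≤ t) :
    (∏ i ∈ s, c i) * t ^ s.card * exp (-(∑ i ∈ s, c i) * t) ≤
      ∏ i ∈ s, (1 - exp (-c i * t)) := by
  rw [← Finset.prod_const, ← Finset.prod_mul_distrib, ← Finset.sum_neg_distrib, Finset.sum_mul,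
    exp_sum, ← Finset.prod_mul_distrib]
  refine Finset.prod_le_prod (fun i hi => by have := hc i hi; positivity) fun i _ => ?_
  simpa [neg_mul] using mul_exp_neg_le_one_sub_exp_neg (c i * t)

lemma prod_one_sub_exp_neg_le_of_le {t₀ : ℝ} (hc : ∀ i ∈ s, 0 ≤ c i) (ht₀ : 0 ≤ t₀)
    (h : t₀ ≤ t) : ∏ i ∈ s, (1 - exp (-c i * t₀)) ≤ ∏ i ∈ s, (1 - exp (-c i * t)) :=
  Finset.prod_le_prod (fun i hi => one_sub_exp_neg_mul_nonneg (hc i hi) ht₀) fun i hi => by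
    have := hc i hi
    gcongr 1 - exp ?_
    exact mul_le_mul_of_nonpos_left h (neg_nonpos.2 this)

end ProdOneSubExp

noncomputable def barnesKernel (M N : ℕ) (a b : ℕ → ℝ) (t : ℝ) : ℝ :=
  exp (-b 0 * t) * (∏ j ∈ Finset.Icc 1 N, (1 - exp (-b j * t))) /
    ∏ i ∈ Finset.Icc 1 M, (1 - exp (-a i * t))

section BarnesKernel

variable {M N : ℕ} {a b : ℕ → ℝ} {t : ℝ}

lemma measurable_barnesKernel : Measurable (barnesKernel M N a b) := by
  unfold barnesKernel
  fun_prop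

lemma barnesKernel_nonneg (ha : ∀ i ∈ Finset.Icc 1 M, 0 ≤ a i) (hb : ∀ j ∈ Finset.Icc 1 N, 0 ≤ b j)
    (ht : 0 ≤ t) : 0 ≤ barnesKernel M N a b t :=
  div_nonneg (mul_nonneg (exp_pos _).le (prod_one_sub_exp_neg_nonneg hb ht))
    (prod_one_sub_exp_neg_nonneg ha ht)

lemma barnesKernel_le_mul_pow_mul_exp (hMN : M ≤ N) (ha : ∀ i ∈ Finset.Icc 1 M, 0 < a i)
    (hb : ∀ j ∈ Finset.Icc 1 N, 0 ≤ b j) (hb₀ : 0 ≤ b 0) (ht : 0 < t) :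
    barnesKernel M N a b t ≤ (∏ j ∈ Finset.Icc 1 N, b j) / (∏ i ∈ Finset.Icc 1 M, a i) *
      t ^ (N - M) * exp ((∑ i ∈ Finset.Icc 1 M, a i) * t) := by
  have hnum : exp (-b 0 * t) * ∏ j ∈ Finset.Icc 1 N, (1 - exp (-b j * t)) ≤
      (∏ j ∈ Finset.Icc 1 N, b j) * t ^ N := by
    have h := prod_one_sub_exp_neg_le_prod_mul_pow hb ht.le
    rw [Nat.card_Icc, Nat.add_sub_cancel] at h
    have hexp : exp (-b 0 * t) ≤ 1 := exp_le_one_iff.2 (by nlinarith)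
    exact (mul_le_of_le_one_left (prod_one_sub_exp_neg_nonneg hb ht.le) hexp).trans h
  have hden := prod_mul_pow_mul_exp_le_prod_one_sub_exp_neg (fun i hi => (ha i hi).le) ht.le
  rw [Nat.card_Icc, Nat.add_sub_cancel] at hden
  have hpa : 0 < ∏ i ∈ Finset.Icc 1 M, a i := Finset.prod_pos ha
  calc barnesKernel M N a b t
      ≤ (∏ j ∈ Finset.Icc 1 N, b j) * t ^ N /
          ((∏ i ∈ Finset.Icc 1 M, a i) * t ^ M * exp (-(∑ i ∈ Finset.Icc 1 M, a i) * t)) :=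
        div_le_div₀ (by have := Finset.prod_nonneg hb; positivity) hnum (by positivity) hden
    _ = _ := by
        rw [← Nat.sub_add_cancel hMN, pow_add, neg_mul, exp_neg, Nat.add_sub_cancel]
        field_simp

lemma mul_pow_mul_exp_le_barnesKernel (hMN : M ≤ N) (ha : ∀ i ∈ Finset.Icc 1 M, 0 < a i)
    (hb : ∀ j ∈ Finset.Icc 1 N, 0 ≤ b j) (ht : 0 < t) :
    (∏ j ∈ Finset.Icc 1 N, b j) / (∏ i ∈ Finset.Icc 1 M, a i) * t ^ (N - M) *
      exp (-(b 0 + ∑ j ∈ Finset.Icc 1 N, b j) * t) ≤ barnesKernel M N a b t := by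
  have hnum := prod_mul_pow_mul_exp_le_prod_one_sub_exp_neg hb ht.le
  rw [Nat.card_Icc, Nat.add_sub_cancel] at hnum
  have hden := prod_one_sub_exp_neg_le_prod_mul_pow (fun i hi => (ha i hi).le) ht.le
  rw [Nat.card_Icc, Nat.add_sub_cancel] at hden
  have hpa : 0 < ∏ i ∈ Finset.Icc 1 M, a i := Finset.prod_pos ha
  calc (∏ j ∈ Finset.Icc 1 N, b j) / (∏ i ∈ Finset.Icc 1 M, a i) * t ^ (N - M) *
        exp (-(b 0 + ∑ j ∈ Finset.Icc 1 N, b j) * t)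
      = exp (-b 0 * t) * ((∏ j ∈ Finset.Icc 1 N, b j) * t ^ N *
          exp (-(∑ j ∈ Finset.Icc 1 N, b j) * t)) / ((∏ i ∈ Finset.Icc 1 M, a i) * t ^ M) := by
        rw [← Nat.sub_add_cancel hMN, pow_add, Nat.add_sub_cancel, neg_add, add_mul, exp_add]
        field_simp
    _ ≤ barnesKernel M N a b t :=
        div_le_div₀ (mul_nonneg (exp_pos _).le (prod_one_sub_exp_neg_nonneg hb ht.le))
          (mul_le_mul_of_nonneg_left hnum (exp_pos _).le) (prod_one_sub_exp_neg_pos ha ht) hden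

lemma barnesKernel_le_mul_exp_neg_of_one_le (ha : ∀ i ∈ Finset.Icc 1 M, 0 < a i)
    (hb : ∀ j ∈ Finset.Icc 1 N, 0 ≤ b j) (ht : 1 ≤ t) :
    barnesKernel M N a b t ≤
      (∏ i ∈ Finset.Icc 1 M, (1 - exp (-a i * 1)))⁻¹ * exp (-b 0 * t) := by
  have ht₀ : 0 ≤ t := zero_le_one.trans ht
  rw [barnesKernel, inv_mul_eq_div]
  exact div_le_div₀ (exp_pos _).le
    (mul_le_of_le_one_right (exp_pos _).le (prod_one_sub_exp_neg_le_one hb ht₀))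
    (prod_one_sub_exp_neg_pos ha one_pos)
    (prod_one_sub_exp_neg_le_of_le (fun i hi => (ha i hi).le) zero_le_one ht)

lemma integrableOn_barnesKernel_Ioi_one (ha : ∀ i ∈ Finset.Icc 1 M, 0 < a i)
    (hb : ∀ j ∈ Finset.Icc 1 N, 0 ≤ b j) (hb₀ : 0 < b 0) :
    IntegrableOn (barnesKernel M N a b) (Ioi 1) := by
  refine ((exp_neg_integrableOn_Ioi 1 hb₀).const_mul
    (∏ i ∈ Finset.Icc 1 M, (1 - exp (-a i * 1)))⁻¹).mono'
    measurable_barnesKernel.aestronglyMeasurable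
    (ae_restrict_of_forall_mem measurableSet_Ioi fun t ht => ?_)
  rw [norm_of_nonneg (barnesKernel_nonneg (fun i hi => (ha i hi).le) hb (zero_le_one.trans ht.le))]
  exact barnesKernel_le_mul_exp_neg_of_one_le ha hb ht.le

lemma exists_abs_barnesKernel_le_mul_of_lt (hMN : M < N) (ha : ∀ i ∈ Finset.Icc 1 M, 0 < a i)
    (hb : ∀ j ∈ Finset.Icc 1 N, 0 ≤ b j) (hb₀ : 0 ≤ b 0) :
    ∃ C, ∀ t ∈ Ioc (0 : ℝ) 1, |barnesKernel M N a b t| ≤ C * t := by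
  set ρ := (∏ j ∈ Finset.Icc 1 N, b j) / ∏ i ∈ Finset.Icc 1 M, a i
  set A := ∑ i ∈ Finset.Icc 1 M, a i
  have hρ : 0 ≤ ρ := div_nonneg (Finset.prod_nonneg hb) (Finset.prod_pos ha).le
  have hA : 0 ≤ A := Finset.sum_nonneg fun i hi => (ha i hi).le
  refine ⟨ρ * exp A, fun t ⟨ht, ht₁⟩ => ?_⟩
  rw [abs_of_nonneg (barnesKernel_nonneg (fun i hi => (ha i hi).le) hb ht.le)]
  calc barnesKernel M N a b t ≤ ρ * t ^ (N - M) * exp (A * t) :=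
        barnesKernel_le_mul_pow_mul_exp hMN.le ha hb hb₀ ht
    _ ≤ ρ * t * exp A := by
        gcongr
        · exact pow_le_of_le_one ht.le ht₁ (by omega)
        · nlinarith
    _ = ρ * exp A * t := by ring

lemma exists_abs_barnesKernel_sub_le_mul (ha : ∀ i ∈ Finset.Icc 1 N, 0 < a i)
    (hb : ∀ j ∈ Finset.Icc 1 N, 0 ≤ b j) (hb₀ : 0 ≤ b 0) :
    ∃ L, ∀ t ∈ Ioc (0 : ℝ) 1, |barnesKernel N N a b t -
      (∏ j ∈ Finset.Icc 1 N, b j) / ∏ i ∈ Finset.Icc 1 N, a i| ≤ L * t := by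
  refine ⟨_, fun t ⟨ht, ht₁⟩ => abs_sub_le_of_mul_exp_le_of_le_mul_exp
    (div_nonneg (Finset.prod_nonneg hb) (Finset.prod_pos ha).le)
    (Finset.sum_nonneg fun i hi => (ha i hi).le)
    (add_nonneg hb₀ (Finset.sum_nonneg hb)) ht.le ht₁ ?_ ?_⟩
  · simpa using mul_pow_mul_exp_le_barnesKernel le_rfl ha hb ht
  · simpa using barnesKernel_le_mul_pow_mul_exp le_rfl ha hb hb₀ ht

end BarnesKernel

section LaplaceType

variable {K : ℝ → ℝ}

lemma integrableOn_Ioi_div_of_abs_le_mul {C : ℝ} (hKm : Measurable K)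
    (hK₀ : ∀ t ∈ Ioc (0 : ℝ) 1, |K t| ≤ C * t) (hK₁ : IntegrableOn K (Ioi 1)) :
    IntegrableOn (fun t => K t / t) (Ioi 0) := by
  rw [← Ioc_union_Ioi_eq_Ioi zero_le_one]
  refine IntegrableOn.union (Measure.integrableOn_of_bounded (M := C) measure_Ioc_lt_top.ne
    (hKm.div measurable_id).aestronglyMeasurable
    (ae_restrict_of_forall_mem measurableSet_Ioc fun t ht => ?_))
    (hK₁.norm.mono' (hKm.div measurable_id).aestronglyMeasurable
      (ae_restrict_of_forall_mem measurableSet_Ioi fun t ht => ?_))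
  · rw [norm_div, norm_eq_abs, norm_of_nonneg ht.1.le, div_le_iff₀ ht.1]
    exact hK₀ t ht
  · rw [norm_div]
    refine div_le_self (norm_nonneg _) ?_
    rw [norm_of_nonneg (zero_le_one.trans ht.le)]
    exact ht.le

lemma norm_exp_neg_mul_sub_one_mul_le {q t : ℝ} (hq : 0 ≤ q) (ht : 0 ≤ t) (x : ℝ) :
    ‖(exp (-t * q) - 1) * x‖ ≤ ‖x‖ := by
  rw [norm_mul]
  refine mul_le_of_le_one_left (norm_nonneg _) ?_
  simpa [neg_mul] using abs_exp_neg_sub_one_le_one (mul_nonneg ht hq)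

lemma integrableOn_exp_neg_mul_sub_one_mul_div {q : ℝ} (hq : 0 ≤ q)
    (hK : IntegrableOn (fun t => K t / t) (Ioi 0)) :
    IntegrableOn (fun t => (exp (-t * q) - 1) * K t / t) (Ioi 0) := by
  simp_rw [mul_div_assoc]
  exact hK.norm.mono' ((by fun_prop : Continuous fun t : ℝ => exp (-t * q) - 1)
    |>.aestronglyMeasurable.mul hK.aestronglyMeasurable)
    (ae_restrict_of_forall_mem measurableSet_Ioi fun t ht =>
      norm_exp_neg_mul_sub_one_mul_le hq (le_of_lt ht) _)

theorem tendsto_integral_exp_neg_mul_sub_one_mul_div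
    (hK : IntegrableOn (fun t => K t / t) (Ioi 0)) :
    Tendsto (fun q => ∫ t in Ioi 0, (exp (-t * q) - 1) * K t / t) atTop
      (𝓝 (-∫ t in Ioi 0, K t / t)) := by
  simp_rw [mul_div_assoc, ← integral_neg]
  refine tendsto_integral_filter_of_dominated_convergence (fun t => ‖K t / t‖)
    (Eventually.of_forall fun q => (by fun_prop : Continuous fun t : ℝ => exp (-t * q) - 1)
      |>.aestronglyMeasurable.mul hK.aestronglyMeasurable)
    ((eventually_ge_atTop 0).mono fun q hq => ae_restrict_of_forall_mem measurableSet_Ioi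
      fun t ht => norm_exp_neg_mul_sub_one_mul_le hq (le_of_lt ht) _)
    hK.norm (ae_restrict_of_forall_mem measurableSet_Ioi fun t ht => ?_)
  have h : Tendsto (fun q => exp (-t * q)) atTop (𝓝 0) :=
    tendsto_exp_atBot.comp (tendsto_id.const_mul_atTop_of_neg (neg_lt_zero.2 ht))
  simpa using (h.sub_const 1).mul_const (K t / t)

lemma integrableOn_exp_neg_mul_sub_one_mul_exp_neg_div {q : ℝ} (hq : 0 ≤ q) :
    IntegrableOn (fun t => (exp (-t * q) - 1) * exp (-t) / t) (Ioi 0) := by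
  refine integrableOn_Ioi_div_of_abs_le_mul (C := q) (by fun_prop) (fun t ht => ?_)
    ((exp_neg_integrableOn_Ioi 1 one_pos).mono' (by fun_prop)
      (ae_restrict_of_forall_mem measurableSet_Ioi fun t ht => ?_))
  · have h := abs_exp_neg_sub_one_le_self (mul_nonneg ht.1.le hq)
    rw [← neg_mul] at h
    rw [abs_mul, abs_of_pos (exp_pos _), mul_comm q]
    exact (mul_le_of_le_one_right (abs_nonneg _) (exp_le_one_iff.2 (by linarith [ht.1]))).trans h
  · simpa using norm_exp_neg_mul_sub_one_mul_le hq (zero_le_one.trans ht.le) (exp (-t))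

lemma integral_exp_neg_mul_sub_one_mul_exp_neg_div {q : ℝ} (hq : 0 ≤ q) :
    ∫ t in Ioi 0, (exp (-t * q) - 1) * exp (-t) / t = -log (q + 1) := by
  have heq : ∀ t : ℝ, (exp (-t * q) - 1) * exp (-t) / t =
      -(t⁻¹ • (exp (-(1 * t)) - exp (-((q + 1) * t)))) := fun t => by
    have h : exp (-((q + 1) * t)) = exp (-t * q) * exp (-t) := by rw [← exp_add]; ring_nf
    rw [smul_eq_mul, one_mul, h]
    ring
  have h := Frullani.integral_Ioi_eq (f := fun x => exp (-x)) (a := 1) (b := q + 1)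
    (L := 1) (R := 0)
    ((by fun_prop : Continuous fun x : ℝ => exp (-x)).locallyIntegrable.locallyIntegrableOn _)
    one_pos (by linarith) ?_ ?_ ?_
  · rw [div_one, sub_zero, smul_eq_mul, mul_one] at h
    simp_rw [heq, integral_neg, h]
  · simpa using ((by fun_prop : Continuous fun x : ℝ => exp (-x)).tendsto 0).mono_left
      nhdsWithin_le_nhds
  · simpa using tendsto_exp_neg_atTop_nhds_zero
  · refine (integrableOn_exp_neg_mul_sub_one_mul_exp_neg_div hq).neg.congr_fun
      (fun t _ => ?_) measurableSet_Ioi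
    simp only [Pi.neg_apply, heq, neg_neg]

theorem exists_abs_integral_exp_neg_mul_sub_one_mul_div_add_mul_log_le {ρ L : ℝ}
    (hKm : Measurable K) (hK₁ : IntegrableOn K (Ioi 1))
    (hKρ : ∀ t ∈ Ioc (0 : ℝ) 1, |K t - ρ| ≤ L * t) :
    ∃ C, ∀ q, 1 ≤ q → |(∫ t in Ioi 0, (exp (-t * q) - 1) * K t / t) + ρ * log q| ≤ C := by
  set G : ℝ → ℝ := fun t => K t - ρ * exp (-t)
  have hG : IntegrableOn (fun t => G t / t) (Ioi 0) := by
    refine integrableOn_Ioi_div_of_abs_le_mul (C := L + |ρ|) (by fun_prop) (fun t ht => ?_)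
      (hK₁.sub ((integrableOn_exp_neg_Ioi 1).const_mul ρ))
    have hexp : |1 - exp (-t)| ≤ t := by
      simpa [abs_sub_comm] using abs_exp_neg_sub_one_le_self ht.1.le
    calc |G t| = |(K t - ρ) + ρ * (1 - exp (-t))| := by simp only [G]; ring_nf
      _ ≤ L * t + |ρ| * t := by
          refine (abs_add_le _ _).trans (add_le_add (hKρ t ht) ?_)
          rw [abs_mul]
          exact mul_le_mul_of_nonneg_left hexp (abs_nonneg ρ)
      _ = (L + |ρ|) * t := by ring
  refine ⟨(∫ t in Ioi 0, ‖G t / t‖) + |ρ|, fun q hq => ?_⟩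
  have hq₀ : 0 < q := zero_lt_one.trans_le hq
  have hsplit : ∫ t in Ioi 0, (exp (-t * q) - 1) * K t / t =
      (∫ t in Ioi 0, (exp (-t * q) - 1) * G t / t) +
        ρ * ∫ t in Ioi 0, (exp (-t * q) - 1) * exp (-t) / t := by
    rw [← integral_const_mul, ← integral_add (integrableOn_exp_neg_mul_sub_one_mul_div hq₀.le hG)
      ((integrableOn_exp_neg_mul_sub_one_mul_exp_neg_div hq₀.le).const_mul ρ)]
    congr 1
    funext t
    simp only [G]
    ring
  have hlog : |log (q + 1) - log q| ≤ 1 := by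
    rw [← log_div (by positivity) hq₀.ne',
      abs_of_nonneg (log_nonneg ((one_le_div hq₀).2 (by linarith)))]
    calc log ((q + 1) / q) ≤ (q + 1) / q - 1 := log_le_sub_one_of_pos (by positivity)
      _ ≤ 1 := by rw [div_sub_one hq₀.ne', add_sub_cancel_left, div_le_one hq₀]; exact hq
  have hbound : ‖∫ t in Ioi 0, (exp (-t * q) - 1) * G t / t‖ ≤ ∫ t in Ioi 0, ‖G t / t‖ := by
    simp_rw [mul_div_assoc]
    exact norm_integral_le_of_norm_le hG.norm (ae_restrict_of_forall_mem measurableSet_Ioi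
      fun t ht => norm_exp_neg_mul_sub_one_mul_le hq₀.le (le_of_lt ht) _)
  rw [hsplit, integral_exp_neg_mul_sub_one_mul_exp_neg_div hq₀.le]
  calc _ = |(∫ t in Ioi 0, (exp (-t * q) - 1) * G t / t) - ρ * (log (q + 1) - log q)| := by
        congr 1
        ring
    _ ≤ (∫ t in Ioi 0, ‖G t / t‖) + |ρ| * 1 := by
        refine (abs_sub _ _).trans (add_le_add hbound ?_)
        rw [abs_mul]
        exact mul_le_mul_of_nonneg_left hlog (abs_nonneg ρ)
    _ = _ := by rw [mul_one]

end LaplaceType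

theorem stmt5_general (M N : ℕ) (a b : ℕ → ℝ)
    (ha : ∀ i ∈ Finset.Icc 1 M, 0 < a i)
    (hb : ∀ j ∈ Finset.Icc 0 N, 0 < b j)
    (K : ℝ → ℝ)
    (hK : ∀ t : ℝ, K t = Real.exp (-(b 0) * t) *
      (∏ j ∈ Finset.Icc 1 N, (1 - Real.exp (-(b j) * t))) /
      ∏ i ∈ Finset.Icc 1 M, (1 - Real.exp (-(a i) * t)))
    (η : ℝ → ℝ)
    (hη : ∀ q : ℝ, η q =
      Real.exp (∫ t in Set.Ioi (0:ℝ), (Real.exp (-t * q) - 1) * K t / t)) :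
    (M < N → Filter.Tendsto η Filter.atTop
      (nhds (Real.exp (-(∫ t in Set.Ioi (0:ℝ), K t / t))))) ∧
    (M = N → ∃ C : ℝ, 0 < C ∧ ∀ q : ℝ, 1 ≤ q →
      |Real.log (η q) +
        (∏ j ∈ Finset.Icc 1 N, b j) / (∏ i ∈ Finset.Icc 1 M, a i) * Real.log q| ≤ C) := by
  have hb₀ : 0 < b 0 := hb 0 (by simp)
  have hb₁ : ∀ j ∈ Finset.Icc 1 N, 0 ≤ b j := fun j hj =>
    (hb j (Finset.Icc_subset_Icc_left zero_le_one hj)).le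
  obtain rfl : K = barnesKernel M N a b := funext hK
  obtain rfl : η = fun q => exp (∫ t in Ioi 0, (exp (-t * q) - 1) * barnesKernel M N a b t / t) :=
    funext hη
  have hK₁ := integrableOn_barnesKernel_Ioi_one ha hb₁ hb₀
  refine ⟨fun hMN => ?_, fun hMN => ?_⟩
  · obtain ⟨C, hC⟩ := exists_abs_barnesKernel_le_mul_of_lt hMN ha hb₁ hb₀.le
    exact (continuous_exp.tendsto _).comp (tendsto_integral_exp_neg_mul_sub_one_mul_div
      (integrableOn_Ioi_div_of_abs_le_mul measurable_barnesKernel hC hK₁))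
  · subst hMN
    obtain ⟨L, hL⟩ := exists_abs_barnesKernel_sub_le_mul ha hb₁ hb₀.le
    obtain ⟨C, hC⟩ := exists_abs_integral_exp_neg_mul_sub_one_mul_div_add_mul_log_le
      measurable_barnesKernel hK₁ hL
    refine ⟨max C 1, by positivity, fun q hq => ?_⟩
    rw [log_exp]
    exact (hC q hq).trans (le_max_left _ _)

/-- asymptotics of the Mellin transform
`η(q) = exp(∫_0^∞ (e^{−tq} − 1) K(t) dt/t)` of the Barnes beta distribution `β_{M,N}(a,b)`:
(i) if `M < N`, `η(q) → exp(−∫_0^∞ K(t) dt/t)` as `q → +∞`;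
(ii) if `M = N`, `|log η(q) + (b_1⋯b_N)/(a_1⋯a_N) log q| ≤ C` for all `q ≥ 1`. -/
theorem stmt5 (M N : ℕ) (hMN : M ≤ N) (a b : ℕ → ℝ)
    (ha : ∀ i ∈ Finset.Icc 1 M, 0 < a i)
    (hb : ∀ j ∈ Finset.Icc 0 N, 0 < b j)
    (K : ℝ → ℝ)
    (hK : ∀ t : ℝ, K t = Real.exp (-(b 0) * t) *
      (∏ j ∈ Finset.Icc 1 N, (1 - Real.exp (-(b j) * t))) /
      ∏ i ∈ Finset.Icc 1 M, (1 - Real.exp (-(a i) * t)))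
    (η : ℝ → ℝ)
    (hη : ∀ q : ℝ, η q =
      Real.exp (∫ t in Set.Ioi (0:ℝ), (Real.exp (-t * q) - 1) * K t / t)) :
    (M < N → Filter.Tendsto η Filter.atTop
      (nhds (Real.exp (-(∫ t in Set.Ioi (0:ℝ), K t / t))))) ∧
    (M = N → ∃ C : ℝ, 0 < C ∧ ∀ q : ℝ, 1 ≤ q →
      |Real.log (η q) +
        (∏ j ∈ Finset.Icc 1 N, b j) / (∏ i ∈ Finset.Icc 1 M, a i) * Real.log q| ≤ C) :=
  stmt5_general M N a b ha hb K hK η hη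
end

section
/- Let τ > 0 and let λ_1, λ_2 be real numbers with λ_1 > −1/τ and λ_2 > −1/τ. Define 𝔣(t) = ( e^t + e^{−tτλ_1} + e^{−tτλ_2} + e^{−t(1+τ(1+λ_1+λ_2))} ) / [ (e^t − 1)(e^{tτ} − 1) ] − e^{−t(1+τ(1+λ_1+λ_2))/2} / [ (e^{t/2} − 1)(e^{tτ/2} − 1) ]. Then 𝔣(t) > 0 for every t > 0. In particular, for a, b ≥ 0 and 0 < c, d < 1 one has a² + b² + c^{−2} + a²b²c²d² − ab(1+c)(1+d) > 0. -/
/-!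
With `a = e^{-tτλ₁/2}`, `b = e^{-tτλ₂/2}`, `c = e^{-t/2}`, `d = e^{-tτ/2}`, the density `𝔣(t)`
equals `(a² + b² + c⁻² + a²b²c²d² − ab(1+c)(1+d)) / ((e^t − 1)(e^{tτ} − 1))`, so positivity of `𝔣`
reduces to the algebraic inequality. That inequality follows from the sum-of-squares identity
`c² (a² + b² + c⁻² + a²b²c²d² − ab(1+c)(1+d))
  = (ac − bc)² + (1 − abc²d)² + abc²(1 − c)(1 + d)`,
whose last two terms cannot vanish together when `c < 1`.
-/

open Real

lemma mul_sq_add_sq_add_inv_sq_sub_eq (a b c d : ℝ) (hc : c ≠ 0) :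
    c ^ 2 * (a ^ 2 + b ^ 2 + (c ^ 2)⁻¹ + a ^ 2 * b ^ 2 * c ^ 2 * d ^ 2 -
        a * b * (1 + c) * (1 + d)) =
      (a * c - b * c) ^ 2 + (1 - a * b * c ^ 2 * d) ^ 2 + a * b * c ^ 2 * (1 - c) * (1 + d) := by
  field_simp
  ring

lemma sq_add_sq_add_inv_sq_sub_pos {a b c d : ℝ} (ha : 0 ≤ a) (hb : 0 ≤ b) (hc0 : 0 < c)
    (hc1 : c < 1) (hd0 : 0 < d) :
    0 < a ^ 2 + b ^ 2 + (c ^ 2)⁻¹ + a ^ 2 * b ^ 2 * c ^ 2 * d ^ 2 -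
      a * b * (1 + c) * (1 + d) := by
  refine pos_of_mul_pos_right ?_ (sq_nonneg c)
  rw [mul_sq_add_sq_add_inv_sq_sub_eq a b c d hc0.ne']
  have hsum : 0 < (1 - a * b * c ^ 2 * d) ^ 2 + a * b * c ^ 2 * (1 - c) * (1 + d) := by
    rcases (mul_nonneg ha hb).eq_or_lt with hab | hab
    · simp [← hab]
    · have : 0 < a * b * c ^ 2 * (1 - c) * (1 + d) := by
        have := sub_pos.2 hc1
        positivity
      positivity
  rw [add_assoc]
  exact add_pos_of_nonneg_of_pos (sq_nonneg _) hsum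

lemma selberg_density_pos {a b x y : ℝ} (ha : 0 ≤ a) (hb : 0 ≤ b) (hx : 1 < x) (hy : 1 < y) :
    0 < (x ^ 2 + a ^ 2 + b ^ 2 + (a * b / (x * y)) ^ 2) / ((x ^ 2 - 1) * (y ^ 2 - 1)) -
      a * b / (x * y) / ((x - 1) * (y - 1)) := by
  have hx1 : x - 1 ≠ 0 := sub_ne_zero.2 hx.ne'
  have hy1 : y - 1 ≠ 0 := sub_ne_zero.2 hy.ne'
  have hxx : 0 < x ^ 2 - 1 := by nlinarith
  have hyy : 0 < y ^ 2 - 1 := by nlinarith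
  have key : (x ^ 2 + a ^ 2 + b ^ 2 + (a * b / (x * y)) ^ 2) / ((x ^ 2 - 1) * (y ^ 2 - 1)) -
      a * b / (x * y) / ((x - 1) * (y - 1)) =
      (a ^ 2 + b ^ 2 + (x⁻¹ ^ 2)⁻¹ + a ^ 2 * b ^ 2 * x⁻¹ ^ 2 * y⁻¹ ^ 2 -
        a * b * (1 + x⁻¹) * (1 + y⁻¹)) / ((x ^ 2 - 1) * (y ^ 2 - 1)) := by
    field_simp
    ring
  rw [key]
  exact div_pos (sq_add_sq_add_inv_sq_sub_pos ha hb (by positivity) (inv_lt_one_of_one_lt₀ hx)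
    (by positivity)) (mul_pos hxx hyy)

lemma exp_eq_exp_half_sq (s : ℝ) : exp s = exp (s / 2) ^ 2 := by
  rw [← exp_nat_mul]
  ring_nf

theorem stmt16_general (τ lam1 lam2 : ℝ) (hτ : 0 < τ)
    (frak : ℝ → ℝ)
    (hfrak : ∀ t : ℝ, frak t =
      (Real.exp t + Real.exp (-t * τ * lam1) + Real.exp (-t * τ * lam2) +
        Real.exp (-t * (1 + τ * (1 + lam1 + lam2)))) /
        ((Real.exp t - 1) * (Real.exp (t * τ) - 1)) -
      Real.exp (-t * (1 + τ * (1 + lam1 + lam2)) / 2) /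
        ((Real.exp (t / 2) - 1) * (Real.exp (t * τ / 2) - 1))) :
    (∀ t : ℝ, 0 < t → 0 < frak t) ∧
    (∀ a b c d : ℝ, 0 ≤ a → 0 ≤ b → 0 < c → c < 1 → 0 < d → d < 1 →
      0 < a^2 + b^2 + (c^2)⁻¹ + a^2 * b^2 * c^2 * d^2 - a * b * (1 + c) * (1 + d)) := by
  refine ⟨fun t ht => ?_,
    fun a b c d ha hb hc0 hc1 hd0 _ => sq_add_sq_add_inv_sq_sub_pos ha hb hc0 hc1 hd0⟩
  have hmid : exp (-t * (1 + τ * (1 + lam1 + lam2)) / 2) =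
      exp (-t * τ * lam1 / 2) * exp (-t * τ * lam2 / 2) / (exp (t / 2) * exp (t * τ / 2)) := by
    rw [← exp_add, ← exp_add, ← exp_sub]
    ring_nf
  rw [hfrak t, exp_eq_exp_half_sq t, exp_eq_exp_half_sq (t * τ),
    exp_eq_exp_half_sq (-t * τ * lam1), exp_eq_exp_half_sq (-t * τ * lam2),
    exp_eq_exp_half_sq (-t * (1 + τ * (1 + lam1 + lam2))), hmid]
  exact selberg_density_pos (exp_pos _).le (exp_pos _).le (one_lt_exp_iff.2 (by positivity))
    (one_lt_exp_iff.2 (by positivity))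

/-- positivity of the spectral density `𝔣` of the Selberg integral
distribution, together with the underlying algebraic inequality
`a² + b² + c⁻² + a²b²c²d² − ab(1+c)(1+d) > 0` for `a, b ≥ 0` and `0 < c, d < 1`. -/
theorem stmt16 (τ lam1 lam2 : ℝ) (hτ : 0 < τ)
    (h1 : -1/τ < lam1) (h2 : -1/τ < lam2)
    (frak : ℝ → ℝ)
    (hfrak : ∀ t : ℝ, frak t =
      (Real.exp t + Real.exp (-t * τ * lam1) + Real.exp (-t * τ * lam2) +
        Real.exp (-t * (1 + τ * (1 + lam1 + lam2)))) /
        ((Real.exp t - 1) * (Real.exp (t * τ) - 1)) -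
      Real.exp (-t * (1 + τ * (1 + lam1 + lam2)) / 2) /
        ((Real.exp (t / 2) - 1) * (Real.exp (t * τ / 2) - 1))) :
    (∀ t : ℝ, 0 < t → 0 < frak t) ∧
    (∀ a b c d : ℝ, 0 ≤ a → 0 ≤ b → 0 < c → c < 1 → 0 < d → d < 1 →
      0 < a^2 + b^2 + (c^2)⁻¹ + a^2 * b^2 * c^2 * d^2 - a * b * (1 + c) * (1 + d)) :=
  stmt16_general τ lam1 lam2 hτ frak hfrak
end

section
/- For real q < 1 define F(q) = Γ(1 − q) Γ(3 − 2q) / Γ(3 − q) · ∏_{m=1}^∞ m^{2q} · Γ(1 − q + m)³ Γ(2 − q + m) / [ Γ(1 + m)³ Γ(2 − 2q + m) ]. Then the infinite product converges and for every positive integer l, F(−l) = ∏_{k=0}^{l−1} (3 + l + k)! / [ ((k+1)!)² · k! ]. -/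
/-!
Write `R_a(m) = Γ(m+1+a) / (Γ(m+1) (m+1)^a)`, which tends to `1` by Euler's limit formula.
For `q < 1` the `m`-th factor of the product is `R_{1-q}(m)^3 R_{2-q}(m) / R_{2-2q}(m)`.
Its logarithm tends to `0`, and its increments are sums of
`a log(1 + 1/x) - log(1 + a/x) = (a² - a)/(2x²) + O(x⁻³)` in which the `x⁻²` terms cancel,
since `3((1-q)² - (1-q)) + ((2-q)² - (2-q)) = (2-2q)² - (2-2q)`.
So the logarithms are `O(m^{-3/2})` and the product converges.

At `q = -l` all parameters are natural numbers `n`, and then the partial products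
`∏_{m<N} R_n(m)` telescope to `(N+1)^{n(n-1)/2} ∏_{i<n} R_i(N) / ∏_{i<n} i!`. The powers of
`N + 1` cancel in the combination, so the product equals a ratio of superfactorials.
-/

open Real Filter Finset Topology
open scoped Nat

noncomputable def gammaRatio (a : ℝ) (m : ℕ) : ℝ :=
  Gamma (m + 1 + a) / (Gamma (m + 1) * ((m : ℝ) + 1) ^ a)

section gammaRatio

variable {a : ℝ}

lemma natCast_add_one_add_pos (ha : -1 < a) (m : ℕ) : (0 : ℝ) < m + 1 + a := by
  have := m.cast_nonneg (α := ℝ)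
  linarith

lemma gammaRatio_pos (ha : -1 < a) (m : ℕ) : 0 < gammaRatio a m :=
  div_pos (Gamma_pos_of_pos (natCast_add_one_add_pos ha m)) (by positivity)

lemma gammaRatio_natCast (n m : ℕ) :
    gammaRatio n m = ((m + n) ! : ℝ) / ((m ! : ℝ) * ((m : ℝ) + 1) ^ n) := by
  rw [gammaRatio, rpow_natCast, Gamma_nat_eq_factorial, ← Gamma_nat_eq_factorial (m + n)]
  push_cast
  ring_nf

lemma gammaRatio_add_one (ha : -1 < a) (m : ℕ) :
    gammaRatio (a + 1) m = gammaRatio a m * ((m + 1 + a) / (m + 1)) := by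
  have hm : (0 : ℝ) < m + 1 := by positivity
  rw [gammaRatio, gammaRatio, ← add_assoc,
    Gamma_add_one (natCast_add_one_add_pos ha m).ne', rpow_add_one hm.ne']
  field_simp

lemma gammaRatio_succ (ha : -1 < a) (m : ℕ) :
    gammaRatio a (m + 1) = gammaRatio a m * ((m + 1 + a) / (m + 1)) / ((m + 2) / (m + 1)) ^ a := by
  have hm : (0 : ℝ) < m + 1 := by positivity
  have hm2 : ((m + 1 : ℕ) : ℝ) + 1 = (m + 2) / (m + 1) * (m + 1) := by push_cast; field_simp; ring
  have hma : ((m + 1 : ℕ) : ℝ) + 1 + a = (m + 1 + a) + 1 := by push_cast; ring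
  rw [gammaRatio, gammaRatio, hma, Gamma_add_one (natCast_add_one_add_pos ha m).ne', hm2,
    mul_rpow (by positivity) hm.le, ← hm2]
  push_cast
  rw [Gamma_add_one hm.ne']
  field_simp

lemma Gamma_add_nat (ha : 0 < a) (n : ℕ) : Gamma (a + n) = Gamma a * ∏ j ∈ range n, (a + j) := by
  induction n with
  | zero => simp
  | succ n ih =>
    rw [prod_range_succ, ← mul_assoc, ← ih, Nat.cast_succ, ← add_assoc,
      Gamma_add_one (by positivity), mul_comm]

lemma tendsto_gammaRatio_of_pos (ha : 0 < a) : Tendsto (gammaRatio a) atTop (𝓝 1) := by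
  have hΓ : Gamma a ≠ 0 := (Gamma_pos_of_pos ha).ne'
  have heq : ∀ m : ℕ, 1 ≤ m →
      Gamma a * ((m : ℝ) / (m + 1)) ^ a / GammaSeq a m = gammaRatio a m := by
    intro m hm
    have hm0 : (0 : ℝ) < m := by exact_mod_cast hm
    have hprod : 0 < ∏ j ∈ range (m + 1), (a + j) := prod_pos fun j _ => by positivity
    rw [gammaRatio, GammaSeq, show (m : ℝ) + 1 + a = a + (m + 1 : ℕ) by push_cast; ring,
      Gamma_add_nat ha, Gamma_nat_eq_factorial, div_rpow hm0.le (by positivity)]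
    field_simp
  have hpow : Tendsto (fun m : ℕ => ((m : ℝ) / (m + 1)) ^ a) atTop (𝓝 1) := by
    simpa [Function.comp_def] using ((continuousAt_rpow_const 1 a (Or.inl one_ne_zero)).tendsto.comp
      (tendsto_natCast_div_add_atTop (1 : ℝ)))
  have := (hpow.const_mul (Gamma a)).div (GammaSeq_tendsto_Gamma a) hΓ
  rw [mul_one, div_self hΓ] at this
  exact this.congr' (eventually_atTop.2 ⟨1, heq⟩)

lemma tendsto_gammaRatio (ha : -1 < a) : Tendsto (gammaRatio a) atTop (𝓝 1) := by
  have hshift : Tendsto (fun m : ℕ => ((m : ℝ) + 1 + a) / (m + 1)) atTop (𝓝 1) := by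
    have := (tendsto_one_div_add_atTop_nhds_zero_nat.const_mul a).const_add 1
    rw [mul_zero, add_zero] at this
    exact this.congr fun m => by field_simp
  have := (tendsto_gammaRatio_of_pos (by linarith : 0 < a + 1)).div hshift one_ne_zero
  rw [div_one] at this
  refine this.congr fun m => ?_
  rw [Pi.div_apply, gammaRatio_add_one ha,
    mul_div_cancel_right₀ _ (_root_.div_pos (natCast_add_one_add_pos ha m) (by positivity)).ne']

end gammaRatio

lemma abs_le_tsum_of_tendsto_zero {u b : ℕ → ℝ} (hu : Tendsto u atTop (𝓝 0)) (hb : Summable b)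
    {m : ℕ} (hub : ∀ n ≥ m, |u n - u (n + 1)| ≤ b n) : |u m| ≤ ∑' j, b (m + j) := by
  have hb' : Summable fun j => b (m + j) := by
    simpa only [add_comm m] using (summable_nat_add_iff m).2 hb
  have hpartial : ∀ N, |u m - u (m + N)| ≤ ∑' j, b (m + j) := by
    intro N
    calc |u m - u (m + N)| = |∑ j ∈ range N, (u (m + j) - u (m + j + 1))| := by
          congr 1; exact (sum_range_sub' (fun j => u (m + j)) N).symm
      _ ≤ ∑ j ∈ range N, b (m + j) :=
          (abs_sum_le_sum_abs _ _).trans (sum_le_sum fun j _ => hub _ (by omega))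
      _ ≤ ∑' j, b (m + j) :=
          hb'.sum_le_tsum _ fun j _ => (abs_nonneg _).trans (hub _ (by omega))
  have hshift : Tendsto (fun N => u (m + N)) atTop (𝓝 0) :=
    (hu.comp (tendsto_add_atTop_nat m)).congr fun N => by rw [Function.comp_apply, add_comm]
  have hlim := (tendsto_const_nhds (x := u m)).sub hshift |>.abs
  rw [sub_zero] at hlim
  exact le_of_tendsto' hlim hpartial

lemma inv_add_pow_three_le {x y : ℝ} (hx : 0 < x) (hy : 0 < y) :
    ((x + y) ^ 3)⁻¹ ≤ (x ^ (3 / 2 : ℝ))⁻¹ * (y ^ (3 / 2 : ℝ))⁻¹ := by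
  rw [← mul_inv, ← mul_rpow hx.le hy.le]
  apply inv_anti₀ (by positivity)
  calc (x * y) ^ (3 / 2 : ℝ) ≤ ((x + y) ^ 2) ^ (3 / 2 : ℝ) :=
        rpow_le_rpow (by positivity) (by nlinarith) (by norm_num)
    _ = (x + y) ^ 3 := by
        rw [← rpow_natCast, ← rpow_mul (by positivity)]
        norm_num

lemma summable_of_tendsto_zero_of_isBigO_sub {u : ℕ → ℝ} {g : ℝ → ℝ}
    (hu : Tendsto u atTop (𝓝 0)) (hstep : ∀ m : ℕ, u m - u (m + 1) = g (m + 1))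
    (hg : g =O[atTop] fun x => (x ^ 3)⁻¹) : Summable u := by
  obtain ⟨C, hC0, hC⟩ := hg.exists_pos
  obtain ⟨X, hX⟩ := eventually_atTop.1 hC.bound
  have hcube : Summable fun n : ℕ => C * (((n : ℝ) + 1) ^ 3)⁻¹ :=
    ((summable_nat_add_iff 1).2 (summable_nat_pow_inv.2 (by norm_num : 1 < 3))).mul_left C
      |>.congr fun n => by push_cast; rfl
  have hzeta : Summable fun j : ℕ => (((j : ℝ) + 1) ^ (3 / 2 : ℝ))⁻¹ := by
    simpa using (summable_nat_add_iff 1).2 (summable_nat_rpow_inv.2 (by norm_num : (1 : ℝ) < 3 / 2))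
  set K := ∑' j : ℕ, (((j : ℝ) + 1) ^ (3 / 2 : ℝ))⁻¹
  refine .of_norm_bounded_eventually_nat
    ((summable_nat_rpow_inv.2 (by norm_num : (1 : ℝ) < 3 / 2)).mul_left (C * K)) ?_
  filter_upwards [eventually_ge_atTop (⌈X⌉₊ + 1)] with m hm
  have hm0 : (0 : ℝ) < m := by exact_mod_cast (Nat.le_add_left 1 _).trans hm
  have hmX : X ≤ m := (Nat.le_ceil X).trans (by exact_mod_cast (Nat.le_succ _).trans hm)
  have hstep_le : ∀ n ≥ m, |u n - u (n + 1)| ≤ C * (((n : ℝ) + 1) ^ 3)⁻¹ := by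
    intro n hn
    have hn' : X ≤ (n : ℝ) + 1 := by
      have : (m : ℝ) ≤ n := by exact_mod_cast hn
      linarith
    have hpos : (0 : ℝ) < (n : ℝ) + 1 := by positivity
    simpa [hstep, Real.norm_eq_abs, abs_of_pos hpos] using hX _ hn'
  have htail : ∀ j : ℕ, C * ((((m + j : ℕ) : ℝ) + 1) ^ 3)⁻¹ ≤
      C * ((m : ℝ) ^ (3 / 2 : ℝ))⁻¹ * (((j : ℝ) + 1) ^ (3 / 2 : ℝ))⁻¹ := by
    intro j
    rw [mul_assoc, Nat.cast_add, add_assoc]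
    exact mul_le_mul_of_nonneg_left (inv_add_pow_three_le hm0 (by positivity)) hC0.le
  calc ‖u m‖ ≤ ∑' j, C * ((((m + j : ℕ) : ℝ) + 1) ^ 3)⁻¹ :=
        abs_le_tsum_of_tendsto_zero hu hcube hstep_le
    _ ≤ ∑' j : ℕ, C * ((m : ℝ) ^ (3 / 2 : ℝ))⁻¹ * (((j : ℝ) + 1) ^ (3 / 2 : ℝ))⁻¹ :=
        Summable.tsum_le_tsum htail
          ((summable_nat_add_iff m).2 hcube |>.congr fun j => by rw [Nat.add_comm])
          (hzeta.mul_left _)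
    _ = C * K * ((m : ℝ) ^ (3 / 2 : ℝ))⁻¹ := by
        rw [tsum_mul_left]; ring

noncomputable def logStep (a x : ℝ) : ℝ := a * log (1 + 1 / x) - log (1 + a / x)

lemma log_gammaRatio_sub_log_gammaRatio_succ {a : ℝ} (ha : -1 < a) (m : ℕ) :
    log (gammaRatio a m) - log (gammaRatio a (m + 1)) = logStep a (m + 1) := by
  have hm : (0 : ℝ) < m + 1 := by positivity
  have h1 : ((m : ℝ) + 1 + a) / (m + 1) = 1 + a / (m + 1) := by field_simp
  have h2 : ((m : ℝ) + 2) / (m + 1) = 1 + 1 / (m + 1) := by field_simp; ring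
  have hpos := div_pos (natCast_add_one_add_pos ha m) hm
  rw [gammaRatio_succ ha, log_div (by have := gammaRatio_pos ha m; positivity) (by positivity),
    log_mul (gammaRatio_pos ha m).ne' hpos.ne', log_rpow (by positivity), h1, h2, logStep]
  ring

lemma abs_log_one_add_sub_le {v : ℝ} (hv : |v| ≤ 1 / 2) :
    |log (1 + v) - (v - v ^ 2 / 2)| ≤ 2 * |v| ^ 3 := by
  have h := abs_log_sub_add_sum_range_le (x := -v) (by rw [abs_neg]; linarith) 2
  norm_num [sum_range_succ] at h
  calc |log (1 + v) - (v - v ^ 2 / 2)| = |-v + v ^ 2 / 2 + log (1 + v)| := by congr 1; ring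
    _ ≤ |v| ^ 3 / (1 - |v|) := h
    _ ≤ 2 * |v| ^ 3 := by
        rw [div_le_iff₀ (by linarith)]
        nlinarith [mul_nonneg (pow_nonneg (abs_nonneg v) 3) (by linarith : 0 ≤ 1 / 2 - |v|)]

lemma isBigO_logStep_sub (a : ℝ) :
    (fun x => logStep a x - (a ^ 2 - a) / (2 * x ^ 2)) =O[atTop] fun x : ℝ => (x ^ 3)⁻¹ := by
  refine .of_bound (2 * |a| + 2 * |a| ^ 3) ?_
  filter_upwards [eventually_ge_atTop (2 * (|a| + 1))] with x hx
  have hx0 : 0 < x := by linarith [abs_nonneg a]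
  rw [Real.norm_eq_abs, Real.norm_eq_abs, abs_of_pos (by positivity : 0 < (x ^ 3)⁻¹), ← inv_pow]
  have key : logStep a x - (a ^ 2 - a) / (2 * x ^ 2) = a * (log (1 + x⁻¹) - (x⁻¹ - x⁻¹ ^ 2 / 2)) -
      (log (1 + a * x⁻¹) - (a * x⁻¹ - (a * x⁻¹) ^ 2 / 2)) := by
    rw [logStep]; field_simp; ring
  rw [key]
  set u := x⁻¹
  have hu0 : 0 < u := inv_pos.2 hx0
  have hux : u * x = 1 := inv_mul_cancel₀ hx0.ne'
  have hu_le : u ≤ 1 / 2 := by nlinarith [abs_nonneg a]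
  have hau_le : |a * u| ≤ 1 / 2 := by
    rw [abs_mul, abs_of_pos hu0]; nlinarith [abs_nonneg a]
  calc _ ≤ |a * (log (1 + u) - (u - u ^ 2 / 2))| +
        |log (1 + a * u) - (a * u - (a * u) ^ 2 / 2)| := abs_sub _ _
    _ ≤ |a| * (2 * |u| ^ 3) + 2 * |a * u| ^ 3 := by
        rw [abs_mul]
        gcongr
        · exact abs_log_one_add_sub_le (by rw [abs_of_pos hu0]; exact hu_le)
        · exact abs_log_one_add_sub_le hau_le
    _ = (2 * |a| + 2 * |a| ^ 3) * u ^ 3 := by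
        rw [abs_mul, abs_of_pos hu0]; ring

noncomputable def selbergFactor (q : ℝ) (m : ℕ) : ℝ :=
  gammaRatio (1 - q) m ^ 3 * gammaRatio (2 - q) m / gammaRatio (2 - 2 * q) m

section selbergFactor

variable {q : ℝ}

lemma selbergFactor_pos (hq : q < 1) (m : ℕ) : 0 < selbergFactor q m := by
  have := gammaRatio_pos (by linarith : -1 < 1 - q) m
  have := gammaRatio_pos (by linarith : -1 < 2 - q) m
  have := gammaRatio_pos (by linarith : -1 < 2 - 2 * q) m
  unfold selbergFactor
  positivity

lemma selbergFactor_eq (hq : q < 1) (m : ℕ) :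
    selbergFactor q m = ((m + 1 : ℕ) : ℝ) ^ (2 * q) *
      (Gamma (1 - q + (m + 1)) ^ 3 * Gamma (2 - q + (m + 1))) /
      (Gamma (1 + (m + 1)) ^ 3 * Gamma (2 - 2 * q + (m + 1))) := by
  have hx : (0 : ℝ) < m + 1 := by positivity
  have hΓ : 0 < Gamma (m + 1 + (2 - 2 * q)) :=
    Gamma_pos_of_pos (natCast_add_one_add_pos (by linarith) m)
  have h2q : ((m : ℝ) + 1) ^ (2 * q) = (((m : ℝ) + 1) ^ q) ^ 2 := by
    rw [mul_comm, rpow_mul hx.le, rpow_two]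
  rw [show 1 - q + ((m : ℝ) + 1) = m + 1 + (1 - q) by ring,
    show 2 - q + ((m : ℝ) + 1) = m + 1 + (2 - q) by ring,
    show 2 - 2 * q + ((m : ℝ) + 1) = m + 1 + (2 - 2 * q) by ring,
    add_comm 1 ((m : ℝ) + 1), Gamma_add_one hx.ne', Nat.cast_succ,
    selbergFactor, gammaRatio, gammaRatio, gammaRatio,
    rpow_sub hx, rpow_sub hx, rpow_sub hx, rpow_one, rpow_two, h2q]
  field_simp

lemma log_selbergFactor (hq : q < 1) (m : ℕ) : log (selbergFactor q m) =
    3 * log (gammaRatio (1 - q) m) + log (gammaRatio (2 - q) m) - log (gammaRatio (2 - 2 * q) m) := by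
  have h1 := gammaRatio_pos (by linarith : -1 < 1 - q) m
  have h2 := gammaRatio_pos (by linarith : -1 < 2 - q) m
  have h3 := gammaRatio_pos (by linarith : -1 < 2 - 2 * q) m
  rw [selbergFactor, log_div (by positivity) h3.ne', log_mul (by positivity) h2.ne', Real.log_pow]
  push_cast; ring

lemma summable_log_selbergFactor (hq : q < 1) : Summable fun m => log (selbergFactor q m) := by
  have h1 : -1 < 1 - q := by linarith
  have h2 : -1 < 2 - q := by linarith
  have h3 : -1 < 2 - 2 * q := by linarith
  have hlim : Tendsto (selbergFactor q) atTop (𝓝 1) := by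
    have := (((tendsto_gammaRatio h1).pow 3).mul (tendsto_gammaRatio h2)).div
      (tendsto_gammaRatio h3) one_ne_zero
    rwa [one_pow, mul_one, div_one] at this
  refine summable_of_tendsto_zero_of_isBigO_sub
    (g := fun x => 3 * logStep (1 - q) x + logStep (2 - q) x - logStep (2 - 2 * q) x) ?_ ?_ ?_
  · have := (continuousAt_log one_ne_zero).tendsto.comp hlim
    rwa [log_one] at this
  · intro m
    rw [log_selbergFactor hq, log_selbergFactor hq, ← log_gammaRatio_sub_log_gammaRatio_succ h1,
      ← log_gammaRatio_sub_log_gammaRatio_succ h2, ← log_gammaRatio_sub_log_gammaRatio_succ h3]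
    ring
  · have hcancel : (fun x => 3 * logStep (1 - q) x + logStep (2 - q) x - logStep (2 - 2 * q) x) =
        fun x => 3 * (logStep (1 - q) x - ((1 - q) ^ 2 - (1 - q)) / (2 * x ^ 2)) +
          (logStep (2 - q) x - ((2 - q) ^ 2 - (2 - q)) / (2 * x ^ 2)) -
          (logStep (2 - 2 * q) x - ((2 - 2 * q) ^ 2 - (2 - 2 * q)) / (2 * x ^ 2)) :=
      funext fun x => by ring
    rw [hcancel]
    exact (((isBigO_logStep_sub _).const_mul_left 3).add (isBigO_logStep_sub _)).sub
      (isBigO_logStep_sub _)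

lemma multipliable_selbergFactor (hq : q < 1) : Multipliable (selbergFactor q) :=
  Real.multipliable_of_summable_log (selbergFactor_pos hq) (summable_log_selbergFactor hq)

end selbergFactor

lemma prod_range_factorial_mul_prod_range_factorial_add (n N : ℕ) :
    (∏ i ∈ range n, i !) * ∏ m ∈ range N, (n + m)! =
      (∏ m ∈ range N, m !) * ∏ i ∈ range n, (N + i)! := by
  rw [← prod_range_add, ← prod_range_add, add_comm]

lemma natCast_add_one_pow_mul_gammaRatio_natCast (i N : ℕ) :
    (N + 1 : ℝ) ^ i * gammaRatio i N = (N + i)! / N ! := by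
  rw [gammaRatio_natCast]
  field_simp

lemma prod_gammaRatio_natCast_mul (n N : ℕ) :
    (∏ m ∈ range N, gammaRatio n m) * ∏ i ∈ range n, (i ! : ℝ) =
      ∏ i ∈ range n, ((N + 1 : ℝ) ^ i * gammaRatio i N) := by
  have hcast := congrArg (Nat.cast (R := ℝ)) (prod_range_factorial_mul_prod_range_factorial_add n N)
  push_cast at hcast
  have hN : ∏ m ∈ range N, ((m : ℝ) + 1) = N ! := by
    exact_mod_cast prod_range_add_one_eq_factorial N
  rw [prod_congr rfl fun i _ => natCast_add_one_pow_mul_gammaRatio_natCast i N]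
  simp only [gammaRatio_natCast, prod_div_distrib, prod_mul_distrib, prod_pow, hN, prod_const,
    card_range]
  rw [prod_congr rfl fun m _ => by rw [add_comm m n], div_mul_eq_mul_div,
    div_eq_div_iff (by positivity) (by positivity)]
  linear_combination (N ! : ℝ) ^ n * hcast

lemma tendsto_prod_gammaRatio_natCast_div (n : ℕ) :
    Tendsto (fun N : ℕ => (∏ m ∈ range N, gammaRatio n m) / (N + 1 : ℝ) ^ (∑ i ∈ range n, i))
      atTop (𝓝 (∏ i ∈ range n, (i ! : ℝ))⁻¹) := by
  have hlim : Tendsto (fun N : ℕ => ∏ i ∈ range n, gammaRatio i N) atTop (𝓝 1) := by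
    simpa using tendsto_finsetProd (range n) fun i _ =>
      tendsto_gammaRatio (a := i) (by linarith [i.cast_nonneg (α := ℝ)])
  have hS : (∏ i ∈ range n, (i ! : ℝ)) ≠ 0 := by positivity
  rw [← one_div]
  refine (hlim.div_const _).congr fun N => ?_
  rw [div_eq_div_iff hS (by positivity), mul_comm, prod_gammaRatio_natCast_mul, prod_mul_distrib,
    prod_pow_eq_pow_sum]

lemma three_mul_sum_range_id_add_sum_range_id (l : ℕ) :
    3 * ∑ i ∈ range (l + 1), i + ∑ i ∈ range (l + 2), i = ∑ i ∈ range (2 * l + 2), i := by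
  induction l with
  | zero => simp
  | succ l ih =>
    rw [show 2 * (l + 1) + 2 = 2 * l + 2 + 1 + 1 by ring]
    simp only [sum_range_succ] at *
    omega

lemma selbergFactor_neg_natCast (l m : ℕ) :
    selbergFactor (-l) m =
      gammaRatio (l + 1 : ℕ) m ^ 3 * gammaRatio (l + 2 : ℕ) m / gammaRatio (2 * l + 2 : ℕ) m := by
  rw [selbergFactor]
  push_cast
  ring_nf

lemma tendsto_prod_selbergFactor_neg_natCast (l : ℕ) :
    Tendsto (fun N => ∏ m ∈ range N, selbergFactor (-l) m) atTop
      (𝓝 ((sf (2 * l + 1) : ℝ) / ((sf l : ℝ) ^ 3 * sf (l + 1)))) := by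
  have hsf : ∀ n, ∏ i ∈ range (n + 1), (i ! : ℝ) = sf n := fun n => by
    exact_mod_cast Nat.prod_range_succ_factorial n
  have hlim := (((tendsto_prod_gammaRatio_natCast_div (l + 1)).pow 3).mul
    (tendsto_prod_gammaRatio_natCast_div (l + 2))).div
    (tendsto_prod_gammaRatio_natCast_div (2 * l + 2)) (by positivity)
  rw [hsf, hsf, hsf (2 * l + 1)] at hlim
  convert hlim using 2 with N
  · simp only [selbergFactor_neg_natCast, prod_div_distrib, prod_mul_distrib, prod_pow, Pi.div_apply]
    rw [← three_mul_sum_range_id_add_sum_range_id, pow_add, pow_mul']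
    field_simp
  · field_simp

lemma tprod_selbergFactor_neg_natCast (l : ℕ) :
    ∏' m, selbergFactor (-l) m = (sf (2 * l + 1) : ℝ) / ((sf l : ℝ) ^ 3 * sf (l + 1)) :=
  tendsto_nhds_unique
    (multipliable_selbergFactor (by linarith [l.cast_nonneg (α := ℝ)])).hasProd.tendsto_prod_nat
    (tendsto_prod_selbergFactor_neg_natCast l)

lemma factorial_mul_superFactorial_eq_prod (l : ℕ) :
    (l ! : ℝ) * (2 * l + 2)! / (l + 2)! * ((sf (2 * l + 1) : ℝ) / ((sf l : ℝ) ^ 3 * sf (l + 1))) =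
      ∏ k ∈ range l, ((3 + l + k)! : ℝ) / ((k + 1)! ^ 2 * k !) := by
  have hA : (∏ k ∈ range l, (3 + l + k)!) * ((l + 2)! * sf (l + 1)) =
      (2 * l + 2)! * sf (2 * l + 1) := by
    change _ * sf (l + 2) = sf (2 * l + 2)
    rw [← Nat.prod_range_succ_factorial (l + 2), ← Nat.prod_range_succ_factorial (2 * l + 2),
      show 2 * l + 2 + 1 = (l + 2 + 1) + l by ring, prod_range_add (fun i => i !) (l + 2 + 1) l,
      mul_comm]
    congr 1
    exact prod_congr rfl fun k _ => by rw [show l + 2 + 1 + k = 3 + l + k by ring]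
  have hB : ∏ k ∈ range l, (k + 1)! = sf l := Nat.prod_range_factorial_succ l
  have hC : (∏ k ∈ range l, k !) * l ! = sf l := by
    rw [← Nat.prod_range_succ_factorial, prod_range_succ]
  have hA' : ((∏ k ∈ range l, (3 + l + k)! : ℕ) : ℝ) * ((l + 2)! * sf (l + 1)) =
      (2 * l + 2)! * sf (2 * l + 1) := by exact_mod_cast hA
  have hB' : ((∏ k ∈ range l, (k + 1)! : ℕ) : ℝ) = sf l := by exact_mod_cast hB
  have hC' : ((∏ k ∈ range l, k ! : ℕ) : ℝ) * l ! = sf l := by exact_mod_cast hC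
  push_cast at hA' hB' hC'
  rw [prod_div_distrib, prod_mul_distrib, prod_pow, hB']
  have hsf : ∀ n, (0 : ℝ) < sf n := fun n => by
    rw [← Nat.prod_range_succ_factorial]; push_cast; positivity
  have := hsf l
  have := hsf (l + 1)
  field_simp
  set A := ∏ k ∈ range l, ((3 + l + k)! : ℝ)
  set C := ∏ k ∈ range l, (k ! : ℝ)
  linear_combination (-(C * l !)) * hA' + (A * (l + 2)! * sf (l + 1)) * hC'

/-- the Mellin transform of the critical (`τ = 1`, `λ₁ = λ₂ = 0`)
Selberg integral distribution
`F(q) = Γ(1−q)Γ(3−2q)/Γ(3−q) · ∏_{m≥1} m^{2q} Γ(1−q+m)³Γ(2−q+m)/(Γ(1+m)³Γ(2−2q+m))`: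
the product converges for `q < 1` and the negative integer moments are
`F(−l) = ∏_{k=0}^{l−1} (3+l+k)!/((k+1)!² k!)`. -/
theorem stmt17
    (f : ℝ → ℕ → ℝ)
    (hf : ∀ (q : ℝ) (m : ℕ), f q m =
      (((m+1 : ℕ) : ℝ)) ^ (2 * q) *
      (Real.Gamma (1 - q + (m+1)) ^ 3 * Real.Gamma (2 - q + (m+1))) /
      (Real.Gamma (1 + (m+1)) ^ 3 * Real.Gamma (2 - 2*q + (m+1))))
    (F : ℝ → ℝ)
    (hF : ∀ q : ℝ, F q =
      Real.Gamma (1 - q) * Real.Gamma (3 - 2*q) / Real.Gamma (3 - q) *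
        ∏' m : ℕ, f q m) :
    (∀ q : ℝ, q < 1 → Multipliable (f q)) ∧
    (∀ l : ℕ, 0 < l →
      F (-(l : ℝ)) = ∏ k ∈ Finset.range l,
        ((Nat.factorial (3 + l + k) : ℝ) /
          ((Nat.factorial (k + 1) : ℝ) ^ 2 * (Nat.factorial k : ℝ)))) := by
  have hf_eq : ∀ q < 1, f q = selbergFactor q := fun q hq =>
    funext fun m => (hf q m).trans (selbergFactor_eq hq m).symm
  refine ⟨fun q hq => by rw [hf_eq q hq]; exact multipliable_selbergFactor hq, fun l _ => ?_⟩
  rw [hF, hf_eq _ (by linarith [l.cast_nonneg (α := ℝ)]), tprod_selbergFactor_neg_natCast,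
    ← factorial_mul_superFactorial_eq_prod, show 1 - -(l : ℝ) = (l : ℕ) + 1 by ring,
    show 3 - 2 * -(l : ℝ) = (2 * l + 2 : ℕ) + 1 by push_cast; ring,
    show 3 - -(l : ℝ) = (l + 2 : ℕ) + 1 by push_cast; ring, Gamma_nat_eq_factorial,
    Gamma_nat_eq_factorial, Gamma_nat_eq_factorial]
end
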